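/- arXiv:math/0412534 — 2 statements merged into one kernel-verified Lean document; each statement's English description precedes it below -/
import Mathlib

section
/- There exists a constant C = C(S) > 0 such that for every h > 0, every grid function u : ℤ² → ℝ³ with u_j ∈ S for all j, and every j ∈ ℤ², the discrete Lagrange multiplier λ^h_j = −(Δ^h u)_j · ν(u_j) satisfies |λ^h_j| ≤ C ∑_{i=1,2} (|(D_{+i}u)_j|² + |(D_{−i}u)_j|²). -/
open RealInnerProductSpace

noncomputable section

/-- The unit normal `ν(p) = ∇F(p)/|∇F(p)|` of the level hypersurface `S = F⁻¹({0})`. -/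
def nuF (F : EuclideanSpace ℝ (Fin 3) → ℝ) (p : EuclideanSpace ℝ (Fin 3)) :
    EuclideanSpace ℝ (Fin 3) :=
  ‖gradient F p‖⁻¹ • gradient F p

/-- Unit lattice vector in direction `i`. -/
def gunit (i : Fin 2) : Fin 2 → ℤ := fun k => if k = i then 1 else 0

/-- Forward difference operator `D_{+i}`. -/
def fdiff (h : ℝ) (i : Fin 2) (u : (Fin 2 → ℤ) → EuclideanSpace ℝ (Fin 3)) :
    (Fin 2 → ℤ) → EuclideanSpace ℝ (Fin 3) :=
  fun j => (h⁻¹ : ℝ) • (u (j + gunit i) - u j)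

/-- Backward difference operator `D_{−i}`. -/
def bdiff (h : ℝ) (i : Fin 2) (u : (Fin 2 → ℤ) → EuclideanSpace ℝ (Fin 3)) :
    (Fin 2 → ℤ) → EuclideanSpace ℝ (Fin 3) :=
  fun j => (h⁻¹ : ℝ) • (u j - u (j - gunit i))

/-- The discrete Laplacian `(Δ^h u)_j = ∑_i (u_{j+e_i} − 2u_j + u_{j−e_i})/h²`. -/
def dLap (h : ℝ) (u : (Fin 2 → ℤ) → EuclideanSpace ℝ (Fin 3)) :
    (Fin 2 → ℤ) → EuclideanSpace ℝ (Fin 3) :=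
  fun j => ∑ i : Fin 2,
    ((h ^ 2)⁻¹ : ℝ) • (u (j + gunit i) - (2 : ℝ) • u j + u (j - gunit i))

-- auxiliary
lemma grad_norm_eq (F : EuclideanSpace ℝ (Fin 3) → ℝ) (p : EuclideanSpace ℝ (Fin 3)) :
    ‖gradient F p‖ = ‖fderiv ℝ F p‖ := by
  rw [gradient]
  exact LinearIsometryEquiv.norm_map _ _

lemma inner_grad (F : EuclideanSpace ℝ (Fin 3) → ℝ) (p v : EuclideanSpace ℝ (Fin 3)) :
    ⟪v, gradient F p⟫ = fderiv ℝ F p v := by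
  rw [real_inner_comm, gradient]
  exact InnerProductSpace.toDual_symm_apply


/-- For grid functions with values in the compact hypersurface
`S = F⁻¹({0})`, the discrete Lagrange multiplier `λ^h_j = −(Δ^h u)_j · ν(u_j)` is
controlled by the squared first differences, with a constant depending only on `S`. -/
theorem discrete_lagrange_multiplier_bound
    (F : EuclideanSpace ℝ (Fin 3) → ℝ) (hF : ContDiff ℝ (⊤ : ℕ∞) F)
    (hne : (F ⁻¹' {0}).Nonempty) (hcpt : IsCompact (F ⁻¹' {0}))
    (hgrad : ∀ p ∈ F ⁻¹' {0}, gradient F p ≠ 0) :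
    ∃ C : ℝ, 0 < C ∧
      ∀ h : ℝ, 0 < h →
      ∀ u : (Fin 2 → ℤ) → EuclideanSpace ℝ (Fin 3), (∀ j, F (u j) = 0) →
      ∀ j : Fin 2 → ℤ,
        |(-(⟪dLap h u j, nuF F (u j)⟫ : ℝ))| ≤
          C * ∑ i : Fin 2, (‖fdiff h i u j‖ ^ 2 + ‖bdiff h i u j‖ ^ 2) := by
  classical
  set S := F ⁻¹' {0} with hS
  obtain ⟨R, hR⟩ := hcpt.isBounded.subset_closedBall 0
  set K := Metric.closedBall (0 : EuclideanSpace ℝ (Fin 3)) R with hK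
  have hKc : IsCompact K := isCompact_closedBall _ _
  have hKconv : Convex ℝ K := convex_closedBall _ _
  have hF' : ContDiff ℝ (⊤ : ℕ∞) (fderiv ℝ F) := hF.fderiv_right (by simp)
  have hF'' : Continuous (fderiv ℝ (fderiv ℝ F)) :=
    (hF'.fderiv_right (m := 0) (by simp)).continuous
  obtain ⟨M, hM⟩ := hKc.exists_bound_of_continuousOn (f := fderiv ℝ (fderiv ℝ F)) hF''.continuousOn
  set M' := max M 0 with hM'def
  have hM'0 : (0:ℝ) ≤ M' := le_max_right _ _
  -- Lipschitz bound for fderiv F on K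
  have hLip : ∀ x ∈ K, ∀ y ∈ K, ‖fderiv ℝ F x - fderiv ℝ F y‖ ≤ M' * ‖x - y‖ := by
    intro x hx y hy
    exact hKconv.norm_image_sub_le_of_norm_fderiv_le
      (fun z _ => ((hF'.differentiable (by simp)) z))
      (fun z hz => le_trans (hM z hz) (le_max_left _ _)) hy hx
  -- Taylor estimate
  have key : ∀ p ∈ S, ∀ q ∈ S, |fderiv ℝ F p (q - p)| ≤ M' * ‖q - p‖ ^ 2 := by
    intro p hp q hq
    have hpK : p ∈ K := hR hp
    have hqK : q ∈ K := hR hq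
    set g : EuclideanSpace ℝ (Fin 3) → ℝ := fun x => F x - fderiv ℝ F p x with hg
    have hgd : ∀ x, DifferentiableAt ℝ g x := fun x =>
      ((hF.differentiable (by simp)) x).sub ((fderiv ℝ F p).differentiableAt)
    have hgderiv : ∀ x, fderiv ℝ g x = fderiv ℝ F x - fderiv ℝ F p := by
      intro x
      rw [hg]
      rw [fderiv_fun_sub ((hF.differentiable (by simp)) x) ((fderiv ℝ F p).differentiableAt),
        ContinuousLinearMap.fderiv]
    have hseg : segment ℝ p q ⊆ K := hKconv.segment_subset hpK hqK
    have hsegbound : ∀ x ∈ segment ℝ p q, ‖fderiv ℝ g x‖ ≤ M' * ‖q - p‖ := by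
      intro x hx
      rw [hgderiv]
      refine le_trans (hLip x (hseg hx) p hpK) ?_
      refine mul_le_mul_of_nonneg_left ?_ hM'0
      obtain ⟨a, b, ha, hb, hab, rfl⟩ := hx
      have haeq : a = 1 - b := by linarith
      subst haeq
      have : (1 - b) • p + b • q - p = b • (q - p) := by module
      rw [this, norm_smul, Real.norm_of_nonneg hb]
      have hb1 : b ≤ 1 := by linarith
      nlinarith [norm_nonneg (q - p)]
    have := (convex_segment p q).norm_image_sub_le_of_norm_fderiv_le
      (fun x _ => hgd x) hsegbound (left_mem_segment ℝ p q) (right_mem_segment ℝ p q)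
    have hFp : F p = 0 := hp
    have hFq : F q = 0 := hq
    have hgq : g q - g p = -(fderiv ℝ F p (q - p)) := by
      simp only [hg, map_sub, hFp, hFq]
      ring
    rw [hgq, norm_neg, Real.norm_eq_abs] at this
    calc |fderiv ℝ F p (q - p)| ≤ M' * ‖q - p‖ * ‖q - p‖ := this
      _ = M' * ‖q - p‖ ^ 2 := by ring
  -- lower bound on gradient norm
  have hgc : ContinuousOn (fun p => ‖gradient F p‖) S := by
    have : Continuous fun p => ‖fderiv ℝ F p‖ := hF'.continuous.norm
    have heq : (fun p => ‖gradient F p‖) = fun p => ‖fderiv ℝ F p‖ := by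
      funext p; exact grad_norm_eq F p
    rw [heq]; exact this.continuousOn
  obtain ⟨p₀, hp₀, hmin'⟩ := hcpt.exists_isMinOn hne hgc
  have hmin : ∀ p ∈ S, ‖gradient F p₀‖ ≤ ‖gradient F p‖ := fun p hp => hmin' hp
  set m := ‖gradient F p₀‖ with hm
  have hm0 : 0 < m := by
    rw [hm, norm_pos_iff]
    exact hgrad p₀ hp₀
  set C0 := m⁻¹ * M' with hC0
  have hC00 : 0 ≤ C0 := mul_nonneg (inv_nonneg.mpr hm0.le) hM'0
  -- per-pair estimate with nuF
  have key2 : ∀ p ∈ S, ∀ q ∈ S, |(⟪q - p, nuF F p⟫ : ℝ)| ≤ C0 * ‖q - p‖ ^ 2 := by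
    intro p hp q hq
    rw [nuF, real_inner_smul_right, inner_grad]
    rw [abs_mul, abs_inv, abs_norm]
    have h1 : ‖gradient F p‖⁻¹ ≤ m⁻¹ := by
      apply inv_anti₀ hm0
      exact hmin p hp
    calc ‖gradient F p‖⁻¹ * |fderiv ℝ F p (q - p)|
        ≤ m⁻¹ * (M' * ‖q - p‖ ^ 2) := by
          apply mul_le_mul h1 (key p hp q hq) (abs_nonneg _)
          exact inv_nonneg.mpr hm0.le
      _ = C0 * ‖q - p‖ ^ 2 := by rw [hC0]; ring
  refine ⟨C0 + 1, by linarith, ?_⟩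
  intro h hh u hu j
  have huS : ∀ j, u j ∈ S := fun j => hu j
  -- rewrite dLap inner product
  set ν := nuF F (u j) with hν
  set A : Fin 2 → EuclideanSpace ℝ (Fin 3) := fun i => u (j + gunit i) - u j with hA
  set B : Fin 2 → EuclideanSpace ℝ (Fin 3) := fun i => u (j - gunit i) - u j with hB
  have hsplit : ∀ i, u (j + gunit i) - (2:ℝ) • u j + u (j - gunit i) = A i + B i := by
    intro i; rw [hA, hB]; simp only; module
  have hinner : (⟪dLap h u j, ν⟫ : ℝ)
      = ∑ i : Fin 2, (h ^ 2)⁻¹ * (⟪A i, ν⟫ + ⟪B i, ν⟫) := by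
    rw [dLap]
    rw [sum_inner]
    refine Finset.sum_congr rfl fun i _ => ?_
    rw [hsplit i, real_inner_smul_left, inner_add_left]
  have hAnorm : ∀ i, ‖fdiff h i u j‖ ^ 2 = (h ^ 2)⁻¹ * ‖A i‖ ^ 2 := by
    intro i
    rw [fdiff]
    rw [norm_smul, mul_pow, Real.norm_eq_abs, abs_inv, abs_of_pos hh]
    rw [← inv_pow]
  have hBnorm : ∀ i, ‖bdiff h i u j‖ ^ 2 = (h ^ 2)⁻¹ * ‖B i‖ ^ 2 := by
    intro i
    rw [bdiff]
    have : u j - u (j - gunit i) = -(B i) := by rw [hB]; simp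
    rw [this, norm_smul, norm_neg, mul_pow, Real.norm_eq_abs, abs_inv, abs_of_pos hh, ← inv_pow]
  have hterm : ∀ i : Fin 2, |(h ^ 2)⁻¹ * (⟪A i, ν⟫ + ⟪B i, ν⟫)|
      ≤ C0 * (‖fdiff h i u j‖ ^ 2 + ‖bdiff h i u j‖ ^ 2) := by
    intro i
    have hh2 : (0:ℝ) < (h ^ 2)⁻¹ := by positivity
    rw [abs_mul, abs_of_pos hh2]
    have hAb : |(⟪A i, ν⟫ : ℝ)| ≤ C0 * ‖A i‖ ^ 2 := key2 (u j) (huS j) _ (huS _)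
    have hBb : |(⟪B i, ν⟫ : ℝ)| ≤ C0 * ‖B i‖ ^ 2 := key2 (u j) (huS j) _ (huS _)
    calc (h ^ 2)⁻¹ * |(⟪A i, ν⟫ : ℝ) + ⟪B i, ν⟫|
        ≤ (h ^ 2)⁻¹ * (C0 * ‖A i‖ ^ 2 + C0 * ‖B i‖ ^ 2) := by
          apply mul_le_mul_of_nonneg_left _ hh2.le
          exact le_trans (abs_add_le _ _) (add_le_add hAb hBb)
      _ = C0 * (‖fdiff h i u j‖ ^ 2 + ‖bdiff h i u j‖ ^ 2) := by
          rw [hAnorm, hBnorm]; ring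
  have hXnn : (0:ℝ) ≤ ∑ i : Fin 2, (‖fdiff h i u j‖ ^ 2 + ‖bdiff h i u j‖ ^ 2) :=
    Finset.sum_nonneg fun i _ => by positivity
  calc |(-(⟪dLap h u j, ν⟫ : ℝ))|
      = |∑ i : Fin 2, (h ^ 2)⁻¹ * (⟪A i, ν⟫ + ⟪B i, ν⟫)| := by rw [abs_neg, hinner]
    _ ≤ ∑ i : Fin 2, |(h ^ 2)⁻¹ * (⟪A i, ν⟫ + ⟪B i, ν⟫)| := Finset.abs_sum_le_sum_abs _ _
    _ ≤ ∑ i : Fin 2, C0 * (‖fdiff h i u j‖ ^ 2 + ‖bdiff h i u j‖ ^ 2) :=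
        Finset.sum_le_sum fun i _ => hterm i
    _ = C0 * ∑ i : Fin 2, (‖fdiff h i u j‖ ^ 2 + ‖bdiff h i u j‖ ^ 2) := by
        rw [Finset.mul_sum]
    _ ≤ (C0 + 1) * ∑ i : Fin 2, (‖fdiff h i u j‖ ^ 2 + ‖bdiff h i u j‖ ^ 2) := by
        nlinarith
end
end

section
/- Let α > 0, h > 0, and let u be a solution of the semi-discrete Landau–Lifshitz–Gilbert system into S on an interval [0,T]; assume moreover that for each i = 1,2 and each sign, the curve t ↦ D_{±i}u(t) is continuously differentiable as a curve in the Hilbert space L²_h(ℤ²;ℝ³), and that t ↦ (d/dt)u(t) is continuous into L²_h. Then for every t ∈ [0,T] the discrete energy is differentiable in t with d/dt E^h[u(t)] = −(α/(1+α²)) ‖(d/dt)u(t)‖²_{L²_h}; in particular t ↦ E^h[u(t)] is nonincreasing, so E^h[u(T)] ≤ E^h[u(0)]. -/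
open RealInnerProductSpace Set

noncomputable section
set_option maxHeartbeats 2000000

/-- The cross product on `ℝ³`. -/
def cross3 (a b : EuclideanSpace ℝ (Fin 3)) : EuclideanSpace ℝ (Fin 3) :=
  (WithLp.equiv 2 (Fin 3 → ℝ)).symm
    ![a 1 * b 2 - a 2 * b 1, a 2 * b 0 - a 0 * b 2, a 0 * b 1 - a 1 * b 0]

/-- The discrete Dirichlet energy
`E^h[u] = (h²/2) ∑_j (1/2) ∑_i (|D_{+i}u_j|² + |D_{−i}u_j|²)`. -/
def denergy (h : ℝ) (u : (Fin 2 → ℤ) → EuclideanSpace ℝ (Fin 3)) : ℝ :=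
  (h ^ 2 / 2) * ∑' j : Fin 2 → ℤ,
    (1 / 2) * ∑ i : Fin 2, (‖fdiff h i u j‖ ^ 2 + ‖bdiff h i u j‖ ^ 2)

/-- The Hilbert space `L²_h(ℤ²; ℝ³)` (the mesh factor `h²` only rescales the norm). -/
abbrev L2h := lp (fun _ : Fin 2 → ℤ => EuclideanSpace ℝ (Fin 3)) 2

/-! ### Auxiliary lemmas -/

abbrev E3' := EuclideanSpace ℝ (Fin 3)

/-- Coordinate evaluation as a continuous linear map on `L2h`. -/
def evalCLM' (j : Fin 2 → ℤ) : L2h →L[ℝ] E3' :=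
  LinearMap.mkContinuous
    { toFun := fun f => f j
      map_add' := fun f g => by simp [lp.coeFn_add]
      map_smul' := fun c f => by simp [lp.coeFn_smul] }
    1 (fun f => by rw [one_mul]; exact lp.norm_apply_le_norm two_ne_zero f j)

lemma summable_inner3 {ι : Type*} (f g : ι → E3') (hf : Summable fun j => ‖f j‖^2)
    (hg : Summable fun j => ‖g j‖^2) : Summable fun j => (⟪f j, g j⟫ : ℝ) := by
  have habs : Summable fun j => |(⟪f j, g j⟫ : ℝ)| := by
    refine Summable.of_nonneg_of_le (fun j => abs_nonneg _) (fun j => ?_)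
      ((hf.add hg).mul_left (1/2))
    have h1 := abs_real_inner_le_norm (f j) (g j)
    nlinarith [norm_nonneg (f j), norm_nonneg (g j), sq_nonneg (‖f j‖ - ‖g j‖)]
  exact habs.of_abs

lemma summable_shift {f : (Fin 2 → ℤ) → ℝ} (c : Fin 2 → ℤ) (hf : Summable f) :
    Summable fun j => f (j + c) := (Equiv.addRight c).summable_iff.2 hf

lemma bdiff_eq_fdiff (h : ℝ) (i : Fin 2) (u : (Fin 2 → ℤ) → E3') (j : Fin 2 → ℤ) :
    bdiff h i u j = fdiff h i u (j - gunit i) := by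
  simp [bdiff, fdiff, sub_add_cancel]

lemma summable_sq_smul {ι : Type*} (c : ℝ) (f : ι → E3') (hf : Summable fun j => ‖f j‖^2) :
    Summable fun j => ‖c • f j‖^2 := by
  have : (fun j => ‖c • f j‖^2) = fun j => c^2 * ‖f j‖^2 := by
    funext j; rw [norm_smul]; simp [mul_pow, sq_abs]
  rw [this]; exact hf.mul_left _

lemma summable_sq_sub {ι : Type*} (f g : ι → E3') (hf : Summable fun j => ‖f j‖^2)
    (hg : Summable fun j => ‖g j‖^2) : Summable fun j => ‖f j - g j‖^2 := by
  refine Summable.of_nonneg_of_le (fun j => sq_nonneg _) (fun j => ?_)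
    ((hf.add hg).mul_left 2)
  have h1 := norm_sub_le (f j) (g j)
  nlinarith [norm_nonneg (f j), norm_nonneg (g j), norm_nonneg (f j - g j),
    sq_nonneg (‖f j‖ - ‖g j‖)]

lemma hsq_diff (h : ℝ) (i : Fin 2) (U : (Fin 2 → ℤ) → E3') (j : Fin 2 → ℤ) :
    ((h^2)⁻¹ : ℝ) • (U (j + gunit i) - (2:ℝ) • U j + U (j - gunit i))
      = (h⁻¹ : ℝ) • (fdiff h i U j - bdiff h i U j) := by
  simp only [fdiff, bdiff, smul_sub, smul_smul, ← mul_inv, ← pow_two]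
  module

lemma summable_lap_sq (h : ℝ) (i : Fin 2) (U : (Fin 2 → ℤ) → E3')
    (hf : Summable fun j => ‖fdiff h i U j‖^2) (hb : Summable fun j => ‖bdiff h i U j‖^2) :
    Summable fun j => ‖((h^2)⁻¹ : ℝ) • (U (j + gunit i) - (2:ℝ) • U j + U (j - gunit i))‖^2 := by
  have : (fun j => ‖((h^2)⁻¹ : ℝ) • (U (j + gunit i) - (2:ℝ) • U j + U (j - gunit i))‖^2)
      = fun j => ‖(h⁻¹ : ℝ) • (fdiff h i U j - bdiff h i U j)‖^2 := by
    funext j; rw [hsq_diff h]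
  rw [this]
  exact summable_sq_smul _ _ (summable_sq_sub _ _ hf hb)

/-- Discrete summation by parts. -/
lemma sbp (h : ℝ) (hh : h ≠ 0) (i : Fin 2) (w U : (Fin 2 → ℤ) → E3')
    (hw : Summable fun j => ‖w j‖^2) (hU : Summable fun j => ‖fdiff h i U j‖^2) :
    ∑' j, (⟪fdiff h i w j, fdiff h i U j⟫ : ℝ)
      = -∑' j, (⟪w j, ((h^2)⁻¹ : ℝ) • (U (j + gunit i) - (2:ℝ) • U j + U (j - gunit i))⟫ : ℝ) := by
  set e := gunit i with he
  have hUd : Summable fun j => ‖U (j + e) - U j‖^2 := by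
    have : (fun j => ‖U (j + e) - U j‖^2) = fun j => ‖h • fdiff h i U j‖^2 := by
      funext j; rw [fdiff, smul_smul, mul_inv_cancel₀ hh, one_smul]
    rw [this]; exact summable_sq_smul _ _ hU
  have hw' : Summable fun j => ‖w (j + e)‖^2 := summable_shift e hw
  set A : (Fin 2 → ℤ) → ℝ := fun j => ⟪w (j + e), U (j + e) - U j⟫ with hA_def
  set B : (Fin 2 → ℤ) → ℝ := fun j => ⟪w j, U (j + e) - U j⟫ with hB_def
  have hA : Summable A := summable_inner3 _ _ hw' hUd
  have hB : Summable B := summable_inner3 _ _ hw hUd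
  set C : (Fin 2 → ℤ) → ℝ := fun j => ⟪w j, U j - U (j - e)⟫ with hC_def
  have hCA : ∀ j, C (j + e) = A j := by
    intro j; simp only [hC_def, hA_def, add_sub_cancel_right]
  have hC : Summable C := by
    rw [← (Equiv.addRight e).summable_iff]
    exact hA.congr fun j => (hCA j).symm
  have htA : ∑' j, A j = ∑' j, C j := by
    rw [← Equiv.tsum_eq (Equiv.addRight e) C]
    exact tsum_congr fun j => (hCA j).symm
  have step1 : ∑' j, (⟪fdiff h i w j, fdiff h i U j⟫ : ℝ)
      = (h^2)⁻¹ * ∑' j, (A j - B j) := by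
    rw [← tsum_mul_left]
    refine tsum_congr fun j => ?_
    simp only [fdiff, real_inner_smul_left, real_inner_smul_right, inner_sub_left,
      hA_def, hB_def]
    ring_nf
    rfl
  rw [step1, Summable.tsum_sub hA hB, htA]
  have step2 : ∑' j, C j - ∑' j, B j = ∑' j, (C j - B j) := (Summable.tsum_sub hC hB).symm
  rw [step2, ← tsum_neg, ← tsum_mul_left]
  refine tsum_congr fun j => ?_
  have hcb : C j - B j = -(⟪w j, U (j + e) - (2:ℝ) • U j + U (j - e)⟫ : ℝ) := by
    simp only [hC_def, hB_def, ← inner_sub_right, ← inner_neg_right]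
    congr 1
    module
  rw [hcb, real_inner_smul_right]
  ring

lemma inner_E3 (x y : E3') : (⟪x, y⟫ : ℝ) = x 0 * y 0 + x 1 * y 1 + x 2 * y 2 := by
  simp [PiLp.inner_apply, Fin.sum_univ_three, mul_comm]

lemma cross3_apply' (a b : E3') (k : Fin 3) :
    cross3 a b k = ![a 1 * b 2 - a 2 * b 1, a 2 * b 0 - a 0 * b 2, a 0 * b 1 - a 1 * b 0] k := rfl

/-- The key pointwise identity for the LLG vector field. -/
lemma key_identity (ν Δ : E3') (hν : ‖ν‖ = 1) (α : ℝ) :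
    (1 + α^2) * (⟪cross3 ν Δ + α • (Δ + (-(⟪Δ, ν⟫ : ℝ)) • ν), Δ⟫ : ℝ)
      = α * ‖cross3 ν Δ + α • (Δ + (-(⟪Δ, ν⟫ : ℝ)) • ν)‖^2 := by
  have hν2 : ν 0 ^ 2 + ν 1 ^ 2 + ν 2 ^ 2 = 1 := by
    have h1 : (⟪ν, ν⟫ : ℝ) = 1 := by rw [real_inner_self_eq_norm_sq, hν]; norm_num
    rw [inner_E3] at h1
    linear_combination h1
  have hns : ∀ v : E3', ‖v‖^2 = (⟪v, v⟫ : ℝ) := fun v => (real_inner_self_eq_norm_sq v).symm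
  rw [hns, inner_E3, inner_E3]
  simp only [PiLp.add_apply, PiLp.smul_apply, smul_eq_mul, cross3_apply', inner_E3]
  simp only [Matrix.cons_val_zero, Matrix.cons_val_one, Matrix.head_cons, Matrix.cons_val_two,
    Matrix.tail_cons]
  linear_combination (-(α*(Δ 0^2+Δ 1^2+Δ 2^2) + α^3*(ν 0*Δ 0+ν 1*Δ 1+ν 2*Δ 2)^2)) * hν2

lemma lp_norm_sq (f : L2h) : ‖f‖^2 = ∑' j, ‖f j‖^2 := by
  have := lp.norm_rpow_eq_tsum (p := 2) (by norm_num) f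
  simp only [ENNReal.toReal_ofNat] at this
  rw [← Real.rpow_natCast ‖f‖ 2]
  rw [show ((2:ℕ):ℝ) = (2:ℝ) by norm_num, this]
  exact tsum_congr fun j => by rw [← Real.rpow_natCast ‖f j‖ 2]; norm_num

lemma nuF_norm (F : E3' → ℝ) (p : E3') (hg : gradient F p ≠ 0) : ‖nuF F p‖ = 1 := by
  rw [nuF, norm_smul, norm_inv, norm_norm, inv_mul_cancel₀ (norm_ne_zero_iff.2 hg)]

set_option maxHeartbeats 2000000 in
/-- Energy identity for the semi-discrete Landau–Lifshitz–Gilbert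
system into the compact hypersurface `S = F⁻¹({0})`:
`d/dt E^h[u(t)] = −(α/(1+α²)) ‖∂_t u(t)‖²_{L²_h}`, so the energy is nonincreasing. -/
theorem llg_discrete_energy_identity
    (F : EuclideanSpace ℝ (Fin 3) → ℝ) (hF : ContDiff ℝ (⊤ : ℕ∞) F)
    (hne : (F ⁻¹' {0}).Nonempty) (hcpt : IsCompact (F ⁻¹' {0}))
    (hgrad : ∀ p ∈ F ⁻¹' {0}, gradient F p ≠ 0)
    (α : ℝ) (hα : 0 < α) (h : ℝ) (hh : 0 < h) (T : ℝ) (hT : 0 ≤ T)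
    (u du : (Fin 2 → ℤ) → ℝ → EuclideanSpace ℝ (Fin 3))
    -- `u` is a solution of the semi-discrete LLG system into `S` on `[0,T]`:
    (hS : ∀ j, ∀ t ∈ Icc 0 T, F (u j t) = 0)
    (huderiv : ∀ j, ∀ t ∈ Icc 0 T, HasDerivWithinAt (u j) (du j t) (Icc 0 T) t)
    (hducont : ∀ j, ContinuousOn (du j) (Icc 0 T))
    (heq : ∀ j, ∀ t ∈ Icc 0 T,
      du j t = cross3 (nuF F (u j t)) (dLap h (fun j' => u j' t) j) +
        α • (dLap h (fun j' => u j' t) j +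
          (-(⟪dLap h (fun j' => u j' t) j, nuF F (u j t)⟫ : ℝ)) • nuF F (u j t)))
    (hL2diff : ∀ t ∈ Icc 0 T, ∀ i : Fin 2, ∀ σ : Bool,
      Summable fun j => ‖(if σ then fdiff h i else bdiff h i) (fun j' => u j' t) j‖ ^ 2)
    (hL2du : ∀ t ∈ Icc 0 T, Summable fun j => ‖du j t‖ ^ 2)
    -- the first differences are continuously differentiable as curves in `L²_h`:
    (hC1 : ∀ i : Fin 2, ∀ σ : Bool, ∃ V : ℝ → L2h,
      ContDiffOn ℝ 1 V (Icc 0 T) ∧ ∀ t ∈ Icc 0 T, ∀ j,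
        V t j = (if σ then fdiff h i else bdiff h i) (fun j' => u j' t) j)
    -- `t ↦ (d/dt)u(t)` is continuous into `L²_h`:
    (hWcont : ∃ W : ℝ → L2h, ContinuousOn W (Icc 0 T) ∧
      ∀ t ∈ Icc 0 T, ∀ j, W t j = du j t) :
    (∀ t ∈ Icc 0 T,
      HasDerivWithinAt (fun s => denergy h fun j => u j s)
        (-(α / (1 + α ^ 2)) * (h ^ 2 * ∑' j : Fin 2 → ℤ, ‖du j t‖ ^ 2))
        (Icc 0 T) t) ∧
    AntitoneOn (fun s => denergy h fun j => u j s) (Icc 0 T) ∧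
    denergy h (fun j => u j T) ≤ denergy h (fun j => u j 0) := by
  have hh0 : h ≠ 0 := ne_of_gt hh
  have hα2 : (0:ℝ) < 1 + α^2 := by positivity
  have hderiv : ∀ t ∈ Icc 0 T,
      HasDerivWithinAt (fun s => denergy h fun j => u j s)
        (-(α / (1 + α ^ 2)) * (h ^ 2 * ∑' j : Fin 2 → ℤ, ‖du j t‖ ^ 2)) (Icc 0 T) t := by
    rcases eq_or_lt_of_le hT with hT0 | hT0
    · -- degenerate case T = 0
      intro t ht
      rw [← hT0] at ht
      have ht0 : t = 0 := le_antisymm ht.2 ht.1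
      rw [hasDerivWithinAt_iff_tendsto_slope]
      have hempty : Icc (0:ℝ) T \ {t} = ∅ := by
        rw [← hT0, ht0, Icc_self]
        simp
      rw [hempty, nhdsWithin_empty]
      exact Filter.tendsto_bot
    · intro t ht
      -- choose the C¹ lifts of the difference quotients
      have hC1' : ∀ p : Fin 2 × Bool, ∃ V : ℝ → L2h,
          ContDiffOn ℝ 1 V (Icc 0 T) ∧ ∀ s ∈ Icc 0 T, ∀ j,
            V s j = (if p.2 then fdiff h p.1 else bdiff h p.1) (fun j' => u j' s) j :=
        fun p => hC1 p.1 p.2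
      choose V hV using hC1'
      -- energy as a finite sum of squared L² norms
      have energy_eq : ∀ s ∈ Icc 0 T,
          denergy h (fun j => u j s) = (h^2/4) * ∑ p : Fin 2 × Bool, ‖V p s‖^2 := by
        intro s hs
        have hsum : ∀ p : Fin 2 × Bool, Summable fun j =>
            ‖(if p.2 then fdiff h p.1 else bdiff h p.1) (fun j' => u j' s) j‖^2 :=
          fun p => hL2diff s hs p.1 p.2
        have hVn : ∀ p : Fin 2 × Bool, ‖V p s‖^2 = ∑' j,
            ‖(if p.2 then fdiff h p.1 else bdiff h p.1) (fun j' => u j' s) j‖^2 := by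
          intro p
          rw [lp_norm_sq]
          exact tsum_congr fun j => by rw [(hV p).2 s hs j]
        have hpt : ∀ j, ∑ i : Fin 2,
            (‖fdiff h i (fun j' => u j' s) j‖^2 + ‖bdiff h i (fun j' => u j' s) j‖^2)
              = ∑ p : Fin 2 × Bool,
                ‖(if p.2 then fdiff h p.1 else bdiff h p.1) (fun j' => u j' s) j‖^2 := by
          intro j
          rw [Fintype.sum_prod_type]
          refine Finset.sum_congr rfl fun i _ => ?_
          rw [Fintype.sum_bool]
          simp
        simp only [denergy]
        rw [tsum_mul_left]
        have : ∑' j, ∑ i : Fin 2,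
            (‖fdiff h i (fun j' => u j' s) j‖^2 + ‖bdiff h i (fun j' => u j' s) j‖^2)
              = ∑ p : Fin 2 × Bool, ‖V p s‖^2 := by
          rw [tsum_congr hpt, Summable.tsum_finsetSum (fun p _ => hsum p)]
          exact Finset.sum_congr rfl fun p _ => (hVn p).symm
        rw [this]
        ring
      -- derivative of each V p
      have hVd : ∀ p : Fin 2 × Bool,
          HasDerivWithinAt (V p) (derivWithin (V p) (Icc 0 T) t) (Icc 0 T) t :=
        fun p => (((hV p).1.differentiableOn one_ne_zero) t ht).hasDerivWithinAt
      set Vd : Fin 2 × Bool → L2h := fun p => derivWithin (V p) (Icc 0 T) t with hVd_def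
      have hu : UniqueDiffWithinAt ℝ (Icc 0 T) t := (uniqueDiffOn_Icc hT0) t ht
      -- identify the coordinates of the derivative
      have hVdj : ∀ p : Fin 2 × Bool, ∀ j, Vd p j
          = (if p.2 then fdiff h p.1 else bdiff h p.1) (fun j' => du j' t) j := by
        rintro ⟨i, σ⟩ j
        have h1 : HasDerivWithinAt (fun s => V (i, σ) s j) (Vd (i, σ) j) (Icc 0 T) t :=
          (evalCLM' j).hasFDerivAt.comp_hasDerivWithinAt t (hVd (i, σ))
        have hG : HasDerivWithinAt
            (fun s => (if σ then fdiff h i else bdiff h i) (fun j' => u j' s) j)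
            ((if σ then fdiff h i else bdiff h i) (fun j' => du j' t) j) (Icc 0 T) t := by
          cases σ
          · simp only [Bool.false_eq_true, if_false, bdiff]
            exact ((huderiv j t ht).sub (huderiv (j - gunit i) t ht)).const_smul (h⁻¹ : ℝ)
          · simp only [if_true, fdiff]
            exact ((huderiv (j + gunit i) t ht).sub (huderiv j t ht)).const_smul (h⁻¹ : ℝ)
        have h2 : HasDerivWithinAt (fun s => V (i, σ) s j)
            ((if σ then fdiff h i else bdiff h i) (fun j' => du j' t) j) (Icc 0 T) t :=
          hG.congr (fun s hs => (hV (i, σ)).2 s hs j) ((hV (i, σ)).2 t ht j)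
        exact (h1.derivWithin hu).symm.trans (h2.derivWithin hu)
      -- derivative of the reformulated energy
      have hψ : HasDerivWithinAt (fun s => (h^2/4) * ∑ p : Fin 2 × Bool, ‖V p s‖^2)
          ((h^2/4) * ∑ p : Fin 2 × Bool, (2 * (⟪V p t, Vd p⟫ : ℝ))) (Icc 0 T) t := by
        refine HasDerivWithinAt.const_mul _ ?_
        exact HasDerivWithinAt.fun_sum fun p _ => (hVd p).norm_sq
      -- summability data at time t
      have hSw : Summable fun j => ‖du j t‖^2 := hL2du t ht
      have hSf : ∀ i : Fin 2, Summable fun j => ‖fdiff h i (fun j' => u j' t) j‖^2 :=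
        fun i => by simpa using hL2diff t ht i true
      have hSb : ∀ i : Fin 2, Summable fun j => ‖bdiff h i (fun j' => u j' t) j‖^2 :=
        fun i => by simpa using hL2diff t ht i false
      have hLsum : ∀ i : Fin 2, Summable fun j => (⟪du j t,
          ((h^2)⁻¹ : ℝ) • (u (j + gunit i) t - (2:ℝ) • u j t + u (j - gunit i) t)⟫ : ℝ) :=
        fun i => summable_inner3 _ _ hSw
          (by simpa using summable_lap_sq h i (fun j' => u j' t) (hSf i) (hSb i))
      -- inner products as tsums
      have hinner : ∀ p : Fin 2 × Bool, (⟪V p t, Vd p⟫ : ℝ)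
          = ∑' j, (⟪(if p.2 then fdiff h p.1 else bdiff h p.1) (fun j' => du j' t) j,
              (if p.2 then fdiff h p.1 else bdiff h p.1) (fun j' => u j' t) j⟫ : ℝ) := by
        intro p
        rw [real_inner_comm, lp.inner_eq_tsum]
        exact tsum_congr fun j => by rw [hVdj p j, (hV p).2 t ht j]
      -- summation by parts
      have hfd : ∀ i : Fin 2,
          ∑' j, (⟪fdiff h i (fun j' => du j' t) j, fdiff h i (fun j' => u j' t) j⟫ : ℝ)
            = -∑' j, (⟪du j t,
                ((h^2)⁻¹ : ℝ) • (u (j + gunit i) t - (2:ℝ) • u j t + u (j - gunit i) t)⟫ : ℝ) := by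
        intro i
        simpa using sbp h hh0 i (fun j' => du j' t) (fun j' => u j' t) hSw (hSf i)
      have hbd : ∀ i : Fin 2,
          ∑' j, (⟪bdiff h i (fun j' => du j' t) j, bdiff h i (fun j' => u j' t) j⟫ : ℝ)
            = ∑' j, (⟪fdiff h i (fun j' => du j' t) j, fdiff h i (fun j' => u j' t) j⟫ : ℝ) := by
        intro i
        rw [← Equiv.tsum_eq (Equiv.subRight (gunit i))
          (fun j => (⟪fdiff h i (fun j' => du j' t) j, fdiff h i (fun j' => u j' t) j⟫ : ℝ))]
        exact tsum_congr fun j => by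
          rw [bdiff_eq_fdiff, bdiff_eq_fdiff]; rfl
      -- pointwise LLG identity
      have hkey : ∀ j, (⟪du j t, dLap h (fun j' => u j' t) j⟫ : ℝ)
          = (α/(1+α^2)) * ‖du j t‖^2 := by
        intro j
        have hmem : u j t ∈ F ⁻¹' {0} := by
          simp only [mem_preimage, mem_singleton_iff]
          exact hS j t ht
        have hν : ‖nuF F (u j t)‖ = 1 := nuF_norm F (u j t) (hgrad _ hmem)
        have hk := key_identity (nuF F (u j t)) (dLap h (fun j' => u j' t) j) hν α
        rw [← heq j t ht] at hk
        rw [div_mul_eq_mul_div, eq_div_iff (ne_of_gt hα2)]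
        linarith [hk]
      -- collapse the Laplacian sum
      have hLap : ∑ i : Fin 2, ∑' j, (⟪du j t,
            ((h^2)⁻¹ : ℝ) • (u (j + gunit i) t - (2:ℝ) • u j t + u (j - gunit i) t)⟫ : ℝ)
          = ∑' j, (⟪du j t, dLap h (fun j' => u j' t) j⟫ : ℝ) := by
        rw [← Summable.tsum_finsetSum (fun i _ => hLsum i)]
        refine tsum_congr fun j => ?_
        rw [dLap, inner_sum]
      -- value of the derivative
      have hDeq : (h^2/4) * ∑ p : Fin 2 × Bool, (2 * (⟪V p t, Vd p⟫ : ℝ))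
          = -(α / (1 + α ^ 2)) * (h ^ 2 * ∑' j : Fin 2 → ℤ, ‖du j t‖ ^ 2) := by
        have hPsum : ∑ p : Fin 2 × Bool, (2 * (⟪V p t, Vd p⟫ : ℝ))
            = ∑ i : Fin 2, (-4 : ℝ) * ∑' j, (⟪du j t,
                ((h^2)⁻¹ : ℝ) • (u (j + gunit i) t - (2:ℝ) • u j t + u (j - gunit i) t)⟫ : ℝ) := by
          rw [Fintype.sum_prod_type]
          refine Finset.sum_congr rfl fun i _ => ?_
          rw [Fintype.sum_bool, hinner (i, true), hinner (i, false)]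
          simp only [if_true, Bool.false_eq_true, if_false]
          rw [hbd i, hfd i]
          ring
        rw [hPsum, ← Finset.mul_sum, hLap]
        rw [show ∑' j, (⟪du j t, dLap h (fun j' => u j' t) j⟫ : ℝ)
          = ∑' j, (α/(1+α^2)) * ‖du j t‖^2 from tsum_congr hkey]
        rw [tsum_mul_left]
        ring
      have hφ : HasDerivWithinAt (fun s => denergy h fun j => u j s)
          ((h^2/4) * ∑ p : Fin 2 × Bool, (2 * (⟪V p t, Vd p⟫ : ℝ))) (Icc 0 T) t :=
        hψ.congr (fun s hs => energy_eq s hs) (energy_eq t ht)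
      rw [hDeq] at hφ
      exact hφ
  have hcont : ContinuousOn (fun s => denergy h fun j => u j s) (Icc 0 T) :=
    fun s hs => (hderiv s hs).continuousWithinAt
  have hanti : AntitoneOn (fun s => denergy h fun j => u j s) (Icc 0 T) := by
    refine antitoneOn_of_deriv_nonpos (convex_Icc 0 T) hcont ?_ ?_
    · intro x hx
      rw [interior_Icc] at hx
      exact (((hderiv x (Ioo_subset_Icc_self hx)).hasDerivAt
        (Icc_mem_nhds hx.1 hx.2)).differentiableAt).differentiableWithinAt
    · intro x hx
      rw [interior_Icc] at hx
      have hd := ((hderiv x (Ioo_subset_Icc_self hx)).hasDerivAt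
        (Icc_mem_nhds hx.1 hx.2)).deriv
      rw [hd]
      apply mul_nonpos_of_nonpos_of_nonneg
      · rw [neg_nonpos]
        positivity
      · exact mul_nonneg (by positivity) (tsum_nonneg fun j => sq_nonneg _)
  exact ⟨hderiv, hanti, hanti ⟨le_refl 0, hT⟩ ⟨hT, le_refl T⟩ hT⟩
end
end
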